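/- arXiv:2603.08085 — 2 statements merged into one kernel-verified Lean document; each statement's English description precedes it below -/
import Mathlib

section
/- Let (G, H, σ) be a quandle triplet and Ĝ = G ⋊_σ ℤ. Then the map ι : Q(G,H,σ) → Conj(Ĝ), Hg ↦ (g,1)⁻¹ (e,1) (g,1) = (σ(g⁻¹)g, 1), is a quandle homomorphism, and it is injective if and only if H = Fix(σ). -/
/-- The underlying set of the semidirect product `G ⋊_σ ℤ`, with multiplication
`(g,m)·(h,n) = (σⁿ(g) h, m + n)`. -/
def Hat (G : Type*) [Group G] (σ : MulAut G) : Type _ := G × ℤ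

namespace Hat

variable {G : Type*} [Group G] (σ : MulAut G)

/-- The element `(g, n)` of `G ⋊_σ ℤ`. -/
def mk (g : G) (n : ℤ) : Hat G σ := (g, n)

instance : Group (Hat G σ) where
  mul x y := ((σ ^ y.2) x.1 * y.1, x.2 + y.2)
  one := ((1 : G), (0 : ℤ))
  inv x := ((σ ^ (-x.2)) x.1⁻¹, -x.2)
  mul_assoc x y z := by
    show (Prod.mk ((σ ^ z.2) ((σ ^ y.2) x.1 * y.1) * z.1) (x.2 + y.2 + z.2) : G × ℤ) =
      ((σ ^ (y.2 + z.2)) x.1 * ((σ ^ z.2) y.1 * z.1), x.2 + (y.2 + z.2))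
    have : (σ ^ (y.2 + z.2)) x.1 = (σ ^ z.2) ((σ ^ y.2) x.1) := by
      rw [add_comm, zpow_add, MulAut.mul_apply]
    simp [this, map_mul, mul_assoc, add_assoc]
  one_mul x := by
    show (Prod.mk ((σ ^ x.2) 1 * x.1) (0 + x.2) : G × ℤ) = x
    simp
    rfl
  mul_one x := by
    show (Prod.mk ((σ ^ (0 : ℤ)) x.1 * 1) (x.2 + 0) : G × ℤ) = x
    simp
    rfl
  inv_mul_cancel x := by
    show (Prod.mk ((σ ^ x.2) ((σ ^ (-x.2)) x.1⁻¹) * x.1) (-x.2 + x.2) : G × ℤ) =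
      ((1 : G), (0 : ℤ))
    have : (σ ^ x.2) ((σ ^ (-x.2)) x.1⁻¹) = x.1⁻¹ := by
      rw [← MulAut.mul_apply, ← zpow_add, add_neg_cancel, zpow_zero, MulAut.one_apply]
    simp [this]

end Hat

/-!
Everything rests on one identity: `σ(g₁⁻¹) g₁ = σ(g₂⁻¹) g₂` iff `g₂ g₁⁻¹` is fixed by `σ`.
Since `H ⊆ Fix(σ)`, this makes `Hg ↦ (σ(g⁻¹) g, 1)` well defined, and it shows that the map is
injective exactly when every fixed point of `σ` lies in `H`. The homomorphism property is a
computation in `Ĝ`: conjugating `(a,1)` by `(b,1)` gives `(σ(b⁻¹a) b, 1)`.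
-/

namespace Hat

variable {G : Type*} [Group G] (σ : MulAut G)

theorem mk_mul (g h : G) (m n : ℤ) :
    mk σ g m * mk σ h n = mk σ ((σ ^ n) g * h) (m + n) := rfl

theorem mk_inv (g : G) (n : ℤ) : (mk σ g n)⁻¹ = mk σ ((σ ^ (-n)) g⁻¹) (-n) := rfl

theorem mk_left_injective (n : ℤ) : Function.Injective (fun g => mk σ g n) :=
  fun _ _ h => congrArg Prod.fst h

theorem mk_one_conj (a b : G) :
    (mk σ b 1)⁻¹ * mk σ a 1 * mk σ b 1 = mk σ (σ (b⁻¹ * a) * b) 1 := by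
  simp only [mk_inv, mk_mul, zpow_one, zpow_neg, MulAut.inv_apply, MulEquiv.apply_symm_apply,
    neg_add_cancel, zero_add]

end Hat

section Twist

variable {G : Type*} [Group G] (σ : MulAut G)

/-- The first coordinate of `(g,1)⁻¹ (e,1) (g,1) = (σ(g⁻¹) g, 1)`. -/
def twist (g : G) : G := σ g⁻¹ * g

theorem twist_eq_twist_iff (g₁ g₂ : G) :
    twist σ g₁ = twist σ g₂ ↔ σ (g₂ * g₁⁻¹) = g₂ * g₁⁻¹ := by
  simp only [twist, map_mul, map_inv]
  constructor <;> intro h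
  · calc σ g₂ * (σ g₁)⁻¹ = σ g₂ * ((σ g₁)⁻¹ * g₁) * g₁⁻¹ := by group
      _ = g₂ * g₁⁻¹ := by rw [h]; group
  · calc (σ g₁)⁻¹ * g₁ = (σ g₂)⁻¹ * (σ g₂ * (σ g₁)⁻¹) * g₁ := by group
      _ = (σ g₂)⁻¹ * g₂ := by rw [h]; group

theorem twist_coset_op (g₁ g₂ : G) :
    twist σ (σ (g₁ * g₂⁻¹) * g₂) = σ ((twist σ g₂)⁻¹ * twist σ g₁) * twist σ g₂ := by
  simp only [twist, map_mul, map_inv]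
  group

end Twist

section CosetEmbedding

variable {G : Type*} [Group G] (H : Subgroup G) (σ : MulAut G) (hfix : ∀ h ∈ H, σ h = h)

def cosetEmbedding : Quotient (QuotientGroup.rightRel H) → Hat G σ :=
  Quotient.lift (fun g => Hat.mk σ (twist σ g) 1) fun g₁ g₂ h => by
    rw [(twist_eq_twist_iff σ g₁ g₂).2 (hfix _ (QuotientGroup.rightRel_apply.1 h))]

theorem cosetEmbedding_mk (g : G) :
    cosetEmbedding H σ hfix (Quotient.mk _ g) = Hat.mk σ (twist σ g) 1 := rfl

theorem cosetEmbedding_injective_iff :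
    Function.Injective (cosetEmbedding H σ hfix) ↔ (H : Set G) = {g : G | σ g = g} := by
  constructor
  · intro hinj
    refine Set.Subset.antisymm hfix fun x hx => ?_
    have hx' : twist σ 1 = twist σ x := (twist_eq_twist_iff σ 1 x).2 (by simpa using hx)
    have hcoset := Quotient.exact (hinj (congrArg (Hat.mk σ · 1) hx'))
    simpa using QuotientGroup.rightRel_apply.1 hcoset
  · intro hH
    refine Quotient.ind₂ fun g₁ g₂ h => Quotient.sound (QuotientGroup.rightRel_apply.2 ?_)
    have hfixed := (twist_eq_twist_iff σ g₁ g₂).1 (Hat.mk_left_injective σ 1 h)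
    exact (Set.ext_iff.1 hH _).2 hfixed

end CosetEmbedding

/-- Let `(G,H,σ)` be a quandle triplet and `Ĝ = G ⋊_σ ℤ`.  The map
`ι : Q(G,H,σ) → Conj(Ĝ)`, `Hg ↦ (g,1)⁻¹ (e,1) (g,1) = (σ(g⁻¹)g, 1)`, is a
quandle homomorphism, and it is injective iff `H = Fix(σ)`. -/
theorem coset_quandle_embeds_in_hat {G : Type*} [Group G]
    (H : Subgroup G) (σ : MulAut G) (hfix : ∀ h ∈ H, σ h = h) :
    ∃ ι : Quotient (QuotientGroup.rightRel H) → Hat G σ,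
      (∀ g : G, ι (Quotient.mk _ g) =
        (Hat.mk σ g 1)⁻¹ * Hat.mk σ 1 1 * Hat.mk σ g 1) ∧
      (∀ g : G, ι (Quotient.mk _ g) = Hat.mk σ (σ g⁻¹ * g) 1) ∧
      (∀ g₁ g₂ : G,
        ι (Quotient.mk _ (σ (g₁ * g₂⁻¹) * g₂)) =
          (ι (Quotient.mk _ g₂))⁻¹ * ι (Quotient.mk _ g₁) * ι (Quotient.mk _ g₂)) ∧
      (Function.Injective ι ↔ (H : Set G) = {g : G | σ g = g}) := by
  refine ⟨cosetEmbedding H σ hfix, fun g => ?_, fun g => rfl, fun g₁ g₂ => ?_,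
    cosetEmbedding_injective_iff H σ hfix⟩
  · rw [Hat.mk_one_conj, mul_one]
    rfl
  · simp only [cosetEmbedding_mk, Hat.mk_one_conj, twist_coset_op]
end

section
/- Let G be a group and G̃ = (G×G) ⋊_Sw {±1} with the swap action. Let Δ = {(g,g,a) : g ∈ G, a ∈ {±1}} and σ̃(g,h,a) := (h,g,a). Then Δ is a subgroup of G̃, σ̃ is an automorphism of G̃ with Fix(σ̃) = Δ, and the map G → Δ\G̃, g ↦ Δ(g, e, 1), is a quandle isomorphism from Core(G) onto the coset quandle Q(G̃, Δ, σ̃). -/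
/-!
Taking `Δ` to be the fixed subgroup of `σ̃` makes it a subgroup for free. Left multiplication
by `(k, k, ±1)` does not change `h⁻¹g` for `(g, h, a)`, and `h⁻¹g` in turn determines the right
coset `Δ(g, h, a)`; this identifies `Δ\G̃` with `G`, sending `Δ(g, e, 1)` to `g`. Finally
`σ̃((g, e, 1)(h, e, 1)⁻¹)(h, e, 1) = (h, gh⁻¹, 1)`, whose invariant `(gh⁻¹)⁻¹h = hg⁻¹h` is
`g * h` in `Core(G)`.
-/

/-- The swap action of `{±1}` on `G × G`: `1` acts trivially, `-1` swaps. -/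
def sw {G : Type*} (a : ℤˣ) (p : G × G) : G × G :=
  if a = 1 then p else (p.2, p.1)

/-- The underlying set of `G̃ = (G × G) ⋊_Sw {±1}`, with multiplication
`(x, a)·(y, b) = (Sw(b)(x) · y, a b)`; explicitly
`(g₁,h₁,a)(g₂,h₂,b) = (g₁g₂, h₁h₂, ab)` if `b = 1` and `(h₁g₂, g₁h₂, ab)` if `b = -1`. -/
def Tilde (G : Type*) : Type _ := (G × G) × ℤˣ

namespace Tilde

variable {G : Type*} [Group G]

/-- The element `(g, h, a)` of `G̃`. -/
def mk (g h : G) (a : ℤˣ) : Tilde G := ((g, h), a)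

theorem sw_mul {a : ℤˣ} (p q : G × G) : sw a (p * q) = sw a p * sw a q := by
  rcases Int.units_eq_one_or a with h | h <;> simp [sw, h]

theorem sw_sw {a b : ℤˣ} (p : G × G) : sw a (sw b p) = sw (a * b) p := by
  rcases Int.units_eq_one_or a with h | h <;>
    rcases Int.units_eq_one_or b with h' | h' <;> simp [sw, h, h']

theorem sw_inv {a : ℤˣ} (p : G × G) : sw a p⁻¹ = (sw a p)⁻¹ := by
  rcases Int.units_eq_one_or a with h | h <;> simp [sw, h]

instance : Group (Tilde G) where
  mul x y := (sw y.2 x.1 * y.1, x.2 * y.2)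
  one := ((1, 1), 1)
  inv x := (sw x.2 x.1⁻¹, x.2⁻¹)
  mul_assoc x y z := by
    show (Prod.mk (sw z.2 (sw y.2 x.1 * y.1) * z.1) (x.2 * y.2 * z.2) : (G × G) × ℤˣ) =
      (sw (y.2 * z.2) x.1 * (sw z.2 y.1 * z.1), x.2 * (y.2 * z.2))
    rw [sw_mul, sw_sw, mul_comm z.2 y.2]
    simp [mul_assoc]
  one_mul x := by
    obtain ⟨p, a⟩ := x
    show (Prod.mk (sw a (1, 1) * p) ((1 : ℤˣ) * a) : (G × G) × ℤˣ) = (p, a)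
    rcases Int.units_eq_one_or a with h | h <;> simp [sw, h]
  mul_one x := by
    obtain ⟨p, a⟩ := x
    show (Prod.mk (sw (1 : ℤˣ) p * (1, 1)) (a * 1) : (G × G) × ℤˣ) = (p, a)
    simp [sw]
  inv_mul_cancel x := by
    obtain ⟨p, a⟩ := x
    show (Prod.mk (sw a (sw a p⁻¹) * p) (a⁻¹ * a) : (G × G) × ℤˣ) = ((1, 1), 1)
    rw [sw_sw]
    rcases Int.units_eq_one_or a with h | h <;> simp [sw, h] <;> rfl

end Tilde

theorem mul_inv_eq_mul_inv_iff_inv_mul_eq_inv_mul {G : Type*} [Group G] (a b c d : G) :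
    a * b⁻¹ = c * d⁻¹ ↔ c⁻¹ * a = d⁻¹ * b := by
  rw [mul_inv_eq_iff_eq_mul, inv_mul_eq_iff_eq_mul, mul_assoc]

namespace Tilde

variable {G : Type*}

theorem exists_eq_mk (x : Tilde G) : ∃ g h a, x = mk g h a := ⟨_, _, _, rfl⟩

theorem mk_inj {g h g' h' : G} {a a' : ℤˣ} :
    mk g h a = mk g' h' a' ↔ g = g' ∧ h = h' ∧ a = a' := by
  show (((g, h), a) : (G × G) × ℤˣ) = ((g', h'), a') ↔ _
  simp [and_assoc]

variable [Group G]

@[simp]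
theorem mk_mul_mk_one (g₁ h₁ g₂ h₂ : G) (a : ℤˣ) :
    mk g₁ h₁ a * mk g₂ h₂ 1 = mk (g₁ * g₂) (h₁ * h₂) a := by
  show (Prod.mk (sw 1 (g₁, h₁) * (g₂, h₂)) (a * 1) : (G × G) × ℤˣ) = ((g₁ * g₂, h₁ * h₂), a)
  simp [sw]

@[simp]
theorem mk_mul_mk_neg_one (g₁ h₁ g₂ h₂ : G) (a : ℤˣ) :
    mk g₁ h₁ a * mk g₂ h₂ (-1) = mk (h₁ * g₂) (g₁ * h₂) (-a) := by
  show (Prod.mk (sw (-1) (g₁, h₁) * (g₂, h₂)) (a * -1) : (G × G) × ℤˣ) =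
    ((h₁ * g₂, g₁ * h₂), -a)
  simp [sw]

@[simp]
theorem inv_mk_one (g h : G) : (mk g h 1)⁻¹ = mk g⁻¹ h⁻¹ 1 := by
  show (Prod.mk (sw 1 (g, h)⁻¹) (1 : ℤˣ)⁻¹ : (G × G) × ℤˣ) = ((g⁻¹, h⁻¹), 1)
  simp [sw]

@[simp]
theorem inv_mk_neg_one (g h : G) : (mk g h (-1))⁻¹ = mk h⁻¹ g⁻¹ (-1) := by
  show (Prod.mk (sw (-1) (g, h)⁻¹) (-1 : ℤˣ)⁻¹ : (G × G) × ℤˣ) = ((h⁻¹, g⁻¹), -1)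
  simp [sw]

def swapEquiv (G : Type*) [Group G] : Tilde G ≃* Tilde G where
  toFun x := ((x.1.swap, x.2) : (G × G) × ℤˣ)
  invFun x := ((x.1.swap, x.2) : (G × G) × ℤˣ)
  left_inv _ := rfl
  right_inv _ := rfl
  map_mul' x y := by
    show (Prod.mk (sw y.2 x.1 * y.1).swap (x.2 * y.2) : (G × G) × ℤˣ) =
      (sw y.2 x.1.swap * y.1.swap, x.2 * y.2)
    rcases Int.units_eq_one_or y.2 with h | h <;> simp [sw, h]

@[simp]
theorem swapEquiv_mk (g h : G) (a : ℤˣ) : swapEquiv G (mk g h a) = mk h g a := rfl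

def diag (G : Type*) [Group G] : Subgroup (Tilde G) :=
  MonoidHom.eqLocus (swapEquiv G).toMonoidHom (MonoidHom.id _)

theorem mem_diag_iff {x : Tilde G} : x ∈ diag G ↔ swapEquiv G x = x := Iff.rfl

@[simp]
theorem mk_mem_diag {g h : G} {a : ℤˣ} : mk g h a ∈ diag G ↔ g = h := by
  rw [mem_diag_iff, swapEquiv_mk, mk_inj]
  exact ⟨fun e => e.2.1, fun e => ⟨e.symm, e, rfl⟩⟩

def ratio (x : Tilde G) : G := x.1.2⁻¹ * x.1.1

@[simp]
theorem ratio_mk (g h : G) (a : ℤˣ) : ratio (mk g h a) = h⁻¹ * g := rfl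

theorem rightRel_diag_iff {x y : Tilde G} :
    QuotientGroup.rightRel (diag G) x y ↔ ratio x = ratio y := by
  obtain ⟨g₁, h₁, a, rfl⟩ := exists_eq_mk x
  obtain ⟨g₂, h₂, b, rfl⟩ := exists_eq_mk y
  rw [QuotientGroup.rightRel_apply, ratio_mk, ratio_mk]
  rcases Int.units_eq_one_or a with rfl | rfl
  · rw [inv_mk_one, mk_mul_mk_one, mk_mem_diag, mul_inv_eq_mul_inv_iff_inv_mul_eq_inv_mul,
      eq_comm]
  · rw [inv_mk_neg_one, mk_mul_mk_neg_one, mk_mem_diag, eq_comm,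
      mul_inv_eq_mul_inv_iff_inv_mul_eq_inv_mul, eq_comm]

theorem diagCoset_eq_iff {x y : Tilde G} :
    (Quotient.mk _ x : Quotient (QuotientGroup.rightRel (diag G))) = Quotient.mk _ y ↔
      ratio x = ratio y :=
  Quotient.eq.trans rightRel_diag_iff

end Tilde

/-- Let `G̃ = (G×G) ⋊_Sw {±1}`, `Δ = {(g,g,a)}` and `σ̃(g,h,a) = (h,g,a)`.
Then `Δ` is a subgroup of `G̃`, `σ̃` is an automorphism of `G̃` with
`Fix(σ̃) = Δ`, and `g ↦ Δ(g,e,1)` is a quandle isomorphism from `Core(G)`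
onto the coset quandle `Q(G̃, Δ, σ̃)`. -/
theorem core_iso_coset_quandle {G : Type*} [Group G] :
    ∃ Δ : Subgroup (Tilde G),
      (∀ (g h : G) (a : ℤˣ), Tilde.mk g h a ∈ Δ ↔ g = h) ∧
      ∃ σt : Tilde G ≃* Tilde G,
        (∀ (g h : G) (a : ℤˣ), σt (Tilde.mk g h a) = Tilde.mk h g a) ∧
        (∀ x : Tilde G, σt x = x ↔ x ∈ Δ) ∧
        ∃ η : G → Quotient (QuotientGroup.rightRel Δ),
          (∀ g : G, η g = Quotient.mk _ (Tilde.mk g 1 1)) ∧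
          Function.Bijective η ∧
          (∀ g h : G,
            η (h * g⁻¹ * h) =
              Quotient.mk _ (σt (Tilde.mk g 1 1 * (Tilde.mk h 1 1)⁻¹) * Tilde.mk h 1 1)) := by
  refine ⟨Tilde.diag G, fun g h a => Tilde.mk_mem_diag, Tilde.swapEquiv G, Tilde.swapEquiv_mk,
    fun x => Tilde.mem_diag_iff.symm, fun g => Quotient.mk _ (Tilde.mk g 1 1),
    fun g => rfl, ⟨?_, ?_⟩, ?_⟩
  · intro g g' h
    simpa using Tilde.diagCoset_eq_iff.1 h
  · exact Quotient.ind fun x => ⟨Tilde.ratio x, Tilde.diagCoset_eq_iff.2 (by simp)⟩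
  · intro g h
    rw [Tilde.diagCoset_eq_iff]
    simp only [Tilde.inv_mk_one, Tilde.mk_mul_mk_one, Tilde.swapEquiv_mk, Tilde.ratio_mk]
    group
end
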